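/- arXiv:1306.3530 — 4 statements merged into one kernel-verified Lean document; each statement's English description precedes it below -/
import Mathlib

section
/- Let v be continuous and positive on (0,∞) and define φ(μ) = ∫_1^μ (μ−t)/v(t) dt, the alpha divergence d_α(x,μ) = μ·φ(x/μ), and ψθ(r) = ∫_1^r t/v(t) dt. Then d_α(x, μ) = ∫_μ^x ψθ(x/t) dt for all x, μ > 0. -/
/-!
Write `w = 1 / v`, `A r = ∫₁ʳ w` and `ψ r = ∫₁ʳ t w(t) dt`, so that `φ r = r A(r) - ψ(r)` and
`φ' = A`. The perspective `G μ = μ φ(x / μ)` then has derivative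
`φ(x/μ) - (x/μ) A(x/μ) = -ψ(x/μ)`, and since `G x = x φ 1 = 0`, the fundamental theorem of
calculus gives `G μ = ∫_μ^x ψ(x/t) dt`.
-/

open Set MeasureTheory

theorem hasDerivAt_integral_of_continuousOn_Ioi {f : ℝ → ℝ} (hf : ContinuousOn f (Ioi 0))
    {a r : ℝ} (ha : 0 < a) (hr : 0 < r) :
    HasDerivAt (fun u => ∫ t in a..u, f t) (f r) r :=
  intervalIntegral.integral_hasDerivAt_right
    ((hf.mono fun _ ht => (lt_min ha hr).trans_le ht.1).intervalIntegrable)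
    (hf.stronglyMeasurableAtFilter isOpen_Ioi r hr)
    (hf.continuousAt (isOpen_Ioi.mem_nhds hr))

theorem HasDerivAt.mul_comp_div {φ : ℝ → ℝ} {d x t : ℝ} (hφ : HasDerivAt φ d (x / t))
    (ht : t ≠ 0) :
    HasDerivAt (fun μ => μ * φ (x / μ)) (φ (x / t) - x / t * d) t := by
  have hdiv : HasDerivAt (fun μ => x / μ) (x * -(t ^ 2)⁻¹) t := by
    simpa only [div_eq_mul_inv] using (hasDerivAt_inv ht).const_mul x
  have hprod : HasDerivAt (fun μ => μ * φ (x / μ))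
      (1 * φ (x / t) + t * (d * (x * -(t ^ 2)⁻¹))) t :=
    (hasDerivAt_id' t).mul (hφ.comp t hdiv)
  convert hprod using 1
  field_simp
  ring

section Weight

variable {w : ℝ → ℝ}

theorem integral_sub_mul_eq (hw : ContinuousOn w (Ioi 0)) {r : ℝ} (hr : 0 < r) :
    ∫ t in (1:ℝ)..r, (r - t) * w t = r * (∫ t in (1:ℝ)..r, w t) - ∫ t in (1:ℝ)..r, t * w t := by
  have hIcc : uIcc 1 r ⊆ Ioi 0 := fun _ ht => (lt_min one_pos hr).trans_le ht.1
  have hwi : IntervalIntegrable w volume 1 r := (hw.mono hIcc).intervalIntegrable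
  have htwi : IntervalIntegrable (fun t => t * w t) volume 1 r :=
    ((continuousOn_id.mul hw).mono hIcc).intervalIntegrable
  simp_rw [sub_mul]
  rw [intervalIntegral.integral_sub (hwi.const_mul r) htwi, intervalIntegral.integral_const_mul]

theorem hasDerivAt_integral_sub_mul (hw : ContinuousOn w (Ioi 0)) {r : ℝ} (hr : 0 < r) :
    HasDerivAt (fun μ => ∫ t in (1:ℝ)..μ, (μ - t) * w t) (∫ t in (1:ℝ)..r, w t) r := by
  have hsplit : HasDerivAt (fun μ => μ * (∫ t in (1:ℝ)..μ, w t) - ∫ t in (1:ℝ)..μ, t * w t)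
      (1 * (∫ t in (1:ℝ)..r, w t) + r * w r - r * w r) r :=
    ((hasDerivAt_id r).mul (hasDerivAt_integral_of_continuousOn_Ioi hw one_pos hr)).sub
      (hasDerivAt_integral_of_continuousOn_Ioi (continuousOn_id.mul hw) one_pos hr)
  rw [one_mul, add_sub_cancel_right] at hsplit
  refine hsplit.congr_of_eventuallyEq ?_
  filter_upwards [isOpen_Ioi.mem_nhds hr] with μ hμ
  exact integral_sub_mul_eq hw hμ

theorem hasDerivAt_mul_integral_sub_mul_div (hw : ContinuousOn w (Ioi 0)) {x t : ℝ}
    (hx : 0 < x) (ht : 0 < t) :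
    HasDerivAt (fun μ => μ * ∫ s in (1:ℝ)..x / μ, (x / μ - s) * w s)
      (-∫ s in (1:ℝ)..x / t, s * w s) t := by
  convert (hasDerivAt_integral_sub_mul hw (div_pos hx ht)).mul_comp_div ht.ne' using 1
  rw [integral_sub_mul_eq hw (div_pos hx ht)]
  ring

theorem mul_integral_sub_mul_div_eq (hw : ContinuousOn w (Ioi 0)) {x μ : ℝ}
    (hx : 0 < x) (hμ : 0 < μ) :
    μ * ∫ s in (1:ℝ)..x / μ, (x / μ - s) * w s = ∫ t in μ..x, ∫ s in (1:ℝ)..x / t, s * w s := by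
  have hIcc : uIcc μ x ⊆ Ioi 0 := fun _ ht => (lt_min hμ hx).trans_le ht.1
  have hderiv t (ht : t ∈ uIcc μ x) := hasDerivAt_mul_integral_sub_mul_div hw hx (hIcc ht)
  have hψ : ContinuousOn (fun t => ∫ s in (1:ℝ)..x / t, s * w s) (uIcc μ x) :=
    continuousOn_of_forall_continuousAt fun t ht =>
      (hasDerivAt_integral_of_continuousOn_Ioi (continuousOn_id.mul hw) one_pos
        (div_pos hx (hIcc ht))).continuousAt.comp
        (continuousAt_const.div continuousAt_id (hIcc ht).ne')
  have hftc := intervalIntegral.integral_eq_sub_of_hasDerivAt hderiv hψ.neg.intervalIntegrable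
  rw [intervalIntegral.integral_neg, div_self hx.ne', intervalIntegral.integral_same,
    mul_zero, zero_sub, neg_inj] at hftc
  exact hftc.symm

end Weight

theorem alpha_divergence_integral_form
    (v : ℝ → ℝ) (hv : ContinuousOn v (Set.Ioi 0)) (hvpos : ∀ t > 0, 0 < v t)
    (φ ψθ : ℝ → ℝ)
    (hφ : ∀ μ, φ μ = ∫ t in (1:ℝ)..μ, (μ - t) / v t)
    (hψθ : ∀ r, ψθ r = ∫ t in (1:ℝ)..r, t / v t) :
    ∀ x > (0:ℝ), ∀ μ > (0:ℝ),
      μ * φ (x / μ) = ∫ t in μ..x, ψθ (x / t) := by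
  intro x hx μ hμ
  have hw : ContinuousOn (fun t => (v t)⁻¹) (Ioi 0) := hv.inv₀ fun t ht => (hvpos t ht).ne'
  simp_rw [hφ, hψθ, div_eq_mul_inv]
  exact mul_integral_sub_mul_div_eq hw hx hμ
end

section
/- Suppose v(cμ) = f(c)·v(μ) for all c, μ > 0. Then the beta divergence and alpha divergence are related by d_β(x, μ) = (μ/f(μ)) · d_α(x, μ) for all x, μ > 0, where d_α(x,μ) = μ·∫_1^{x/μ} ((x/μ)−t)/v(t) dt and d_β(x,μ) = ∫_μ^x (x−t)/v(t) dt. -/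
noncomputable def betaDivergence (v : ℝ → ℝ) (x μ : ℝ) : ℝ :=
  ∫ t in μ..x, (x - t) / v t

lemma betaDivergence_mul_mul {v f : ℝ → ℝ} (hf : ∀ c > 0, ∀ μ > 0, v (c * μ) = f c * v μ)
    {c x μ : ℝ} (hc : 0 < c) (hx : 0 < x) (hμ : 0 < μ) :
    betaDivergence v (c * x) (c * μ) = c ^ 2 / f c * betaDivergence v x μ := by
  have hintegrand : ∀ s ∈ Set.uIcc μ x,
      (c * x - c * s) / v (c * s) = c / f c * ((x - s) / v s) := by
    intro s hs
    have hs0 : 0 < s := (lt_min hμ hx).trans_le hs.1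
    rw [hf c hc s hs0, ← mul_sub]
    field_simp
  calc betaDivergence v (c * x) (c * μ)
      = c • ∫ s in μ..x, (c * x - c * s) / v (c * s) :=
        (intervalIntegral.smul_integral_comp_mul_left (fun t => (c * x - t) / v t) c).symm
    _ = c ^ 2 / f c * betaDivergence v x μ := by
        rw [intervalIntegral.integral_congr hintegrand, intervalIntegral.integral_const_mul,
          betaDivergence, smul_eq_mul]
        ring

theorem beta_alpha_connection_general
    (v : ℝ → ℝ)
    (f : ℝ → ℝ) (hf : ∀ c > 0, ∀ μ > 0, v (c * μ) = f c * v μ) :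
    ∀ x > (0:ℝ), ∀ μ > (0:ℝ),
      (∫ t in μ..x, (x - t) / v t)
        = (μ / f μ) * (μ * ∫ t in (1:ℝ)..(x / μ), (x / μ - t) / v t) := by
  intro x hx μ hμ
  have hscale := betaDivergence_mul_mul hf hμ (div_pos hx hμ) one_pos
  rw [mul_div_cancel₀ x hμ.ne', mul_one] at hscale
  rw [← betaDivergence, hscale, betaDivergence]
  ring

theorem beta_alpha_connection
    (v : ℝ → ℝ) (hv : ContinuousOn v (Set.Ioi 0)) (hvpos : ∀ t > 0, 0 < v t)
    (f : ℝ → ℝ) (hf : ∀ c > 0, ∀ μ > 0, v (c * μ) = f c * v μ)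
    (hfpos : ∀ c > 0, 0 < f c) (hf1 : f 1 = 1) :
    ∀ x > (0:ℝ), ∀ μ > (0:ℝ),
      (∫ t in μ..x, (x - t) / v t)
        = (μ / f μ) * (μ * ∫ t in (1:ℝ)..(x / μ), (x / μ - t) / v t) :=
  beta_alpha_connection_general v f hf
end

section
/- Let v(μ) = kμ for some k > 0 on (0,∞). Then the alpha and beta divergences induced by v coincide: ∫_μ^x (x−t)/(kt) dt = μ·∫_1^{x/μ} ((x/μ)−t)/(kt) dt for all x, μ > 0. Conversely, among variance functions satisfying v(cμ) = f(c)v(μ), equality d_β = d_α for all x, μ forces f(μ) = μ, i.e. v(μ) = kμ. -/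
open MeasureTheory intervalIntegral

/-- Substitution `t = μ s` in the beta divergence integral. -/
lemma subst_key (v : ℝ → ℝ) (x μ : ℝ) (hμ : μ ≠ 0) :
    (∫ t in μ..x, (x - t) / v t)
      = μ * ∫ s in (1:ℝ)..(x / μ), (x - μ * s) / v (μ * s) := by
  have := intervalIntegral.smul_integral_comp_mul_left
      (a := (1:ℝ)) (b := x / μ) (fun t => (x - t) / v t) μ
  rw [mul_one, mul_div_cancel₀ x hμ] at this
  rw [← this, smul_eq_mul]

theorem alpha_eq_beta_iff_linear_variance
    (k : ℝ) (hk : 0 < k) :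
    (∀ x > (0:ℝ), ∀ μ > (0:ℝ),
        (∫ t in μ..x, (x - t) / (k * t))
          = μ * ∫ t in (1:ℝ)..(x / μ), (x / μ - t) / (k * t)) ∧
    (∀ v f : ℝ → ℝ, ContinuousOn v (Set.Ioi 0) → (∀ t > (0:ℝ), 0 < v t) →
      (∀ c > (0:ℝ), ∀ μ > (0:ℝ), v (c * μ) = f c * v μ) →
      (∀ c > (0:ℝ), 0 < f c) →
      (∀ x > (0:ℝ), ∀ μ > (0:ℝ),
          (∫ t in μ..x, (x - t) / v t)
            = μ * ∫ t in (1:ℝ)..(x / μ), (x / μ - t) / v t) →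
      ∀ μ > (0:ℝ), f μ = μ) := by
  constructor
  · intro x hx μ hμ
    rw [subst_key (fun t => k * t) x μ hμ.ne']
    congr 1
    apply intervalIntegral.integral_congr
    intro s _
    show (x - μ * s) / (k * (μ * s)) = (x / μ - s) / (k * s)
    have h1 : x - μ * s = μ * (x / μ - s) := by field_simp
    have h2 : k * (μ * s) = μ * (k * s) := by ring
    rw [h1, h2, mul_div_mul_left _ _ hμ.ne']
  · intro v f hvcont hvpos hhom hfpos heq μ hμ
    have hfμ : 0 < f μ := hfpos μ hμ
    -- specialize to x = 2 μ
    have hx : (0:ℝ) < 2 * μ := by linarith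
    have hdiv : (2 * μ) / μ = 2 := by field_simp
    have key := heq (2 * μ) hx μ hμ
    rw [subst_key v (2 * μ) μ hμ.ne', hdiv] at key
    -- rewrite the substituted integrand on [1,2]
    have hcong : (∫ s in (1:ℝ)..2, (2 * μ - μ * s) / v (μ * s))
        = (μ / f μ) * ∫ s in (1:ℝ)..2, (2 - s) / v s := by
      rw [← intervalIntegral.integral_const_mul]
      apply intervalIntegral.integral_congr
      intro s hs
      have hs0 : 0 < s := by
        rcases Set.mem_uIcc.1 hs with h | h <;> linarith [h.1]
      have hvs : 0 < v s := hvpos s hs0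
      show (2 * μ - μ * s) / v (μ * s) = μ / f μ * ((2 - s) / v s)
      rw [hhom μ hμ s hs0]
      field_simp
    rw [hcong] at key
    -- positivity of the model integral
    have hI : 0 < ∫ s in (1:ℝ)..2, (2 - s) / v s := by
      apply intervalIntegral.intervalIntegral_pos_of_pos_on
      · apply ContinuousOn.intervalIntegrable
        apply ContinuousOn.div (by fun_prop)
        · apply hvcont.mono
          intro s hs
          rcases Set.mem_uIcc.1 hs with h | h <;> (simp only [Set.mem_Ioi]; linarith [h.1])
        · intro s hs
          have : 0 < s := by rcases Set.mem_uIcc.1 hs with h | h <;> linarith [h.1]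
          exact (hvpos s this).ne'
      · intro s hs
        have hvs : 0 < v s := hvpos s (by linarith [hs.1])
        have : 0 < 2 - s := by linarith [hs.2]
        positivity
      · norm_num
    set I := ∫ s in (1:ℝ)..2, (2 - s) / v s
    -- key : μ * (μ / f μ * I) = μ * I
    have h1 : μ / f μ * I = I := by
      have := mul_left_cancel₀ hμ.ne' key
      linarith
    have h2 : μ / f μ = 1 := by
      have h1' : μ / f μ * I = 1 * I := by linarith
      exact mul_right_cancel₀ hI.ne' h1'
    field_simp at h2
    linarith
end

section
/- For the Tweedie dual cumulant φ_p(μ) = ∫_1^μ (μ−t)/t^p dt, the Csiszár self-duality φ_p(μ) = μ·φ_p(1/μ) for all μ > 0 holds if and only if p = 3/2. More generally, φ_p(μ) = μ·φ_q(1/μ) for all μ > 0 holds if and only if p + q = 3. -/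
/-!
The substitution `t ↦ 1 / t` turns the Csiszár dual `μ φ_q(1/μ)` into `φ_{3-q}(μ)`. Since
`φ_p(1) = φ_p'(1) = 0` and `φ_p''(μ) = μ^(-p)`, the map `p ↦ φ_p` is injective, so `φ_p` is the
dual of `φ_q` exactly when `p = 3 - q`.
-/

open Set MeasureTheory

section IntegralKernel

variable {f g : ℝ → ℝ} {s : Set ℝ} {a x : ℝ}

theorem ContinuousOn.hasDerivAt_integral_right (hs : IsOpen s) (hs' : s.OrdConnected)
    (ha : a ∈ s) (hf : ContinuousOn f s) (hx : x ∈ s) :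
    HasDerivAt (fun μ => ∫ t in a..μ, f t) (f x) x :=
  intervalIntegral.integral_hasDerivAt_right (hf.mono (hs'.uIcc_subset ha hx)).intervalIntegrable
    (hf.stronglyMeasurableAtFilter hs x hx) (hf.continuousAt (hs.mem_nhds hx))

theorem ContinuousOn.hasDerivAt_integral_sub_mul (hs : IsOpen s) (hs' : s.OrdConnected)
    (ha : a ∈ s) (hf : ContinuousOn f s) (hx : x ∈ s) :
    HasDerivAt (fun μ => ∫ t in a..μ, (μ - t) * f t) (∫ t in a..x, f t) x := by
  have hsplit : (fun μ => μ * (∫ t in a..μ, f t) - ∫ t in a..μ, t * f t)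
      =ᶠ[nhds x] fun μ => ∫ t in a..μ, (μ - t) * f t := by
    filter_upwards [hs.mem_nhds hx] with μ hμ
    have hint : IntervalIntegrable f volume a μ :=
      (hf.mono (hs'.uIcc_subset ha hμ)).intervalIntegrable
    have hint' : IntervalIntegrable (fun t => t * f t) volume a μ :=
      hint.continuousOn_mul continuousOn_id
    simp only [sub_mul]
    rw [intervalIntegral.integral_sub (hint.const_mul μ) hint',
      intervalIntegral.integral_const_mul]
  have hderiv := ((hasDerivAt_id x).mul (hf.hasDerivAt_integral_right hs hs' ha hx)).sub
    ((continuousOn_id.mul hf).hasDerivAt_integral_right hs hs' ha hx)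
  refine (hderiv.congr_of_eventuallyEq hsplit.symm).congr_deriv ?_
  simp only [Pi.mul_apply, id_eq, one_mul]
  ring

theorem eqOn_of_eqOn_integral (hs : IsOpen s) (hs' : s.OrdConnected) (ha : a ∈ s)
    (hf : ContinuousOn f s) (hg : ContinuousOn g s)
    (h : EqOn (fun μ => ∫ t in a..μ, f t) (fun μ => ∫ t in a..μ, g t) s) : EqOn f g s := by
  intro x hx
  rw [← (hf.hasDerivAt_integral_right hs hs' ha hx).deriv,
    ← (hg.hasDerivAt_integral_right hs hs' ha hx).deriv]
  exact h.deriv hs hx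

theorem eqOn_of_eqOn_integral_sub_mul (hs : IsOpen s) (hs' : s.OrdConnected) (ha : a ∈ s)
    (hf : ContinuousOn f s) (hg : ContinuousOn g s)
    (h : EqOn (fun μ => ∫ t in a..μ, (μ - t) * f t) (fun μ => ∫ t in a..μ, (μ - t) * g t) s) :
    EqOn f g s := by
  refine eqOn_of_eqOn_integral hs hs' ha hf hg fun x hx => ?_
  dsimp only
  rw [← (hf.hasDerivAt_integral_sub_mul hs hs' ha hx).deriv,
    ← (hg.hasDerivAt_integral_sub_mul hs hs' ha hx).deriv]
  exact h.deriv hs hx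

end IntegralKernel

noncomputable def tweedieDualCumulant (p μ : ℝ) : ℝ :=
  ∫ t in (1 : ℝ)..μ, (μ - t) / t ^ p

theorem continuousOn_rpow_const_Ioi (p : ℝ) : ContinuousOn (fun t : ℝ => t ^ p) (Ioi 0) :=
  continuousOn_id.rpow_const fun _ ht => Or.inl (ne_of_gt ht)

theorem mul_tweedieDualCumulant_one_div (q : ℝ) {μ : ℝ} (hμ : 0 < μ) :
    μ * tweedieDualCumulant q (1 / μ) = tweedieDualCumulant (3 - q) μ := by
  have hpos : ∀ t ∈ uIcc 1 μ, 0 < t := fun t ht => lt_of_lt_of_le (lt_min one_pos hμ) ht.1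
  have hg : ContinuousOn (fun t : ℝ => (1 / μ - t) / t ^ q) (Ioi 0) :=
    (continuousOn_const.sub continuousOn_id).div (continuousOn_rpow_const_Ioi q)
      fun t ht => (Real.rpow_pos_of_pos ht q).ne'
  have hsubst := intervalIntegral.integral_comp_mul_deriv'
    (f := fun t : ℝ => t⁻¹) (f' := fun t => -(t ^ 2)⁻¹) (a := 1) (b := μ)
    (fun t ht => by simpa using hasDerivAt_inv (hpos t ht).ne')
    (fun t ht => ((continuousAt_id.pow 2).inv₀ (pow_pos (hpos t ht) 2).ne').neg.continuousWithinAt)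
    (hg.mono (by rintro _ ⟨t, ht, rfl⟩; exact inv_pos.2 (hpos t ht)))
  rw [inv_one, ← one_div] at hsubst
  rw [tweedieDualCumulant, ← hsubst, ← intervalIntegral.integral_const_mul]
  refine intervalIntegral.integral_congr fun t ht => ?_
  have ht := hpos t ht
  simp only [Function.comp, one_div, Real.inv_rpow ht.le, Real.rpow_sub ht, Real.rpow_ofNat]
  field_simp
  ring

theorem tweedieDualCumulant_eqOn_iff {p r : ℝ} :
    EqOn (tweedieDualCumulant p) (tweedieDualCumulant r) (Ioi 0) ↔ p = r := by
  refine ⟨fun h => ?_, fun h => h ▸ eqOn_refl _ _⟩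
  have hcont : ∀ p : ℝ, ContinuousOn (fun t : ℝ => (t ^ p)⁻¹) (Ioi 0) := fun p =>
    (continuousOn_rpow_const_Ioi p).inv₀ fun t ht => (Real.rpow_pos_of_pos ht p).ne'
  have hkernel := eqOn_of_eqOn_integral_sub_mul isOpen_Ioi ordConnected_Ioi
    (mem_Ioi.2 one_pos) (hcont p) (hcont r) fun μ hμ => by
      simpa only [tweedieDualCumulant, div_eq_mul_inv] using h hμ
  have h2 : (2 : ℝ) ^ p = 2 ^ r := inv_injective (hkernel (mem_Ioi.2 two_pos))
  exact (Real.rpow_right_inj two_pos (by norm_num)).1 h2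

theorem tweedieDualCumulant_eq_mul_one_div_iff (p q : ℝ) :
    (∀ μ > (0 : ℝ), tweedieDualCumulant p μ = μ * tweedieDualCumulant q (1 / μ)) ↔ p + q = 3 :=
  calc (∀ μ > (0 : ℝ), tweedieDualCumulant p μ = μ * tweedieDualCumulant q (1 / μ))
      ↔ EqOn (tweedieDualCumulant p) (tweedieDualCumulant (3 - q)) (Ioi 0) :=
        forall₂_congr fun μ hμ => by rw [mul_tweedieDualCumulant_one_div q hμ]
    _ ↔ p = 3 - q := tweedieDualCumulant_eqOn_iff
    _ ↔ p + q = 3 := eq_sub_iff_add_eq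

theorem tweedie_csiszar_duality :
    (∀ p : ℝ,
      ((∀ μ > (0:ℝ), (∫ t in (1:ℝ)..μ, (μ - t) / t ^ p)
          = μ * ∫ t in (1:ℝ)..(1 / μ), (1 / μ - t) / t ^ p) ↔ p = 3 / 2)) ∧
    (∀ p q : ℝ,
      ((∀ μ > (0:ℝ), (∫ t in (1:ℝ)..μ, (μ - t) / t ^ p)
          = μ * ∫ t in (1:ℝ)..(1 / μ), (1 / μ - t) / t ^ q) ↔ p + q = 3)) := by
  refine ⟨fun p => (tweedieDualCumulant_eq_mul_one_div_iff p p).trans ?_,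
    tweedieDualCumulant_eq_mul_one_div_iff⟩
  constructor <;> intro h <;> linarith
end
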